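/- arXiv:1604.05999 — 2 statements merged into one kernel-verified Lean document; each statement's English description precedes it below -/
import Mathlib

section
/- For positive reals x and y, (x+y)·lg(x+y) − x·lg(x) ≤ y·(2 + lg(x+y)), where lg denotes the base-2 logarithm. -/
/-! Expanding both sides, the inequality says `x * (lg (x + y) - lg x) ≤ 2 * y`. By `log t ≤ t - 1`
the left side is at most `y / log 2`, and `log 2 > 1 / 2`. -/

open Real

lemma Real.mul_log_add_sub_log_le {x y : ℝ} (hx : 0 < x) (hxy : 0 < x + y) :
    x * (log (x + y) - log x) ≤ y := by
  have hlog : log ((x + y) / x) ≤ (x + y) / x - 1 := log_le_sub_one_of_pos (by positivity)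
  rw [log_div hxy.ne' hx.ne'] at hlog
  calc x * (log (x + y) - log x) ≤ x * ((x + y) / x - 1) := by gcongr
    _ = y := by field_simp; ring

lemma Real.inv_log_two_le_two : (log 2)⁻¹ ≤ 2 := by
  rw [inv_le_comm₀ (log_pos one_lt_two) two_pos]
  linarith [log_two_gt_d9]

lemma Real.mul_logb_two_add_sub_logb_two_le {x y : ℝ} (hx : 0 < x) (hy : 0 ≤ y) :
    x * (logb 2 (x + y) - logb 2 x) ≤ 2 * y :=
  calc x * (logb 2 (x + y) - logb 2 x) = x * (log (x + y) - log x) * (log 2)⁻¹ := by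
        simp only [logb, div_eq_mul_inv]; ring
    _ ≤ y * 2 := by
        gcongr
        · exact mul_log_add_sub_log_le hx (by linarith)
        · exact inv_log_two_le_two
    _ = 2 * y := mul_comm _ _

theorem stmt_0 (x y : ℝ) (hx : 0 < x) (hy : 0 < y) :
    (x + y) * Real.logb 2 (x + y) - x * Real.logb 2 x ≤ y * (2 + Real.logb 2 (x + y)) := by
  linear_combination Real.mul_logb_two_add_sub_logb_two_le hx hy.le
end

section
/- Let a, b be positive integers, and let a₁, …, a_r be integers with 0 ≤ a_i < a for each i and ∑ a_i ≤ b. Then ∏_{i=1}^r (1 − a_i/a) ≥ a^{−2b/a − 1}. -/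
/-! Each factor is bounded separately: for `A ≥ 2` the convex function `x ↦ A ^ (-2x)` equals `1`
at `x = 0` and is at most `A⁻¹` at `x = 1 - A⁻¹`, so on `[0, 1 - A⁻¹]` it lies below the chord
`x ↦ 1 - x`. With `x = aᵢ / a` this gives `1 - aᵢ / a ≥ a ^ (-2 aᵢ / a)`, and multiplying over `i`
turns the exponents into `-2 ∑ aᵢ / a ≥ -2b / a`. -/

open Finset

namespace Real

theorem rpow_neg_two_mul_le_one_sub {A x : ℝ} (hA : 2 ≤ A) (hx0 : 0 ≤ x) (hx1 : x ≤ 1 - A⁻¹) :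
    A ^ (-(2 * x)) ≤ 1 - x := by
  set t := 1 - A⁻¹
  have hAinv : A⁻¹ ≤ 2⁻¹ := inv_anti₀ two_pos hA
  have ht : 0 < t := by linarith
  set s := x / t
  have hx : x = s * t := (div_mul_cancel₀ x ht.ne').symm
  have hs0 : 0 ≤ s := div_nonneg hx0 ht.le
  have hs1 : s ≤ 1 := (div_le_one ht).2 hx1
  have hend : A ^ (-(2 * t)) ≤ A⁻¹ := by
    rw [← rpow_neg_one]
    exact rpow_le_rpow_of_exponent_le (by linarith) (by linarith)
  have hend0 : 0 ≤ A ^ (-(2 * t)) := (rpow_pos_of_pos (by linarith) _).le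
  calc A ^ (-(2 * x)) = (1 + (A ^ (-(2 * t)) - 1)) ^ s := by
        rw [add_sub_cancel, ← rpow_mul (by linarith), hx]; ring_nf
    _ ≤ 1 + s * (A ^ (-(2 * t)) - 1) := rpow_one_add_le_one_add_mul_self (by linarith) hs0 hs1
    _ ≤ 1 + s * (A⁻¹ - 1) := by gcongr
    _ = 1 - x := by rw [hx]; ring

end Real

theorem natCast_rpow_neg_two_mul_div_le {a k : ℕ} (hk : k < a) :
    (a : ℝ) ^ (-(2 * (k : ℝ) / a)) ≤ 1 - (k : ℝ) / a := by
  obtain rfl | ha2 : a = 1 ∨ 2 ≤ a := by omega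
  · obtain rfl : k = 0 := by omega
    simp
  have hA : (0 : ℝ) < a := by positivity
  have hk' : (k : ℝ) + 1 ≤ a := by exact_mod_cast hk
  rw [mul_div_assoc]
  refine Real.rpow_neg_two_mul_le_one_sub (by exact_mod_cast ha2) (by positivity) ?_
  rw [le_sub_iff_add_le, inv_eq_one_div, ← add_div, div_le_one hA]
  linarith

theorem natCast_rpow_neg_two_mul_sum_div_le_prod {ι : Type*} {a : ℕ} (s : Finset ι) (f : ι → ℕ)
    (hf : ∀ i ∈ s, f i < a) :
    (a : ℝ) ^ (-(2 * (∑ i ∈ s, (f i : ℝ)) / a)) ≤ ∏ i ∈ s, (1 - (f i : ℝ) / a) := by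
  rcases s.eq_empty_or_nonempty with rfl | ⟨i, hi⟩
  · simp
  have hA : (0 : ℝ) < a := Nat.cast_pos.2 (Nat.zero_lt_of_lt (hf i hi))
  calc (a : ℝ) ^ (-(2 * (∑ i ∈ s, (f i : ℝ)) / a))
      = ∏ i ∈ s, (a : ℝ) ^ (-(2 * (f i : ℝ) / a)) := by
        rw [← Real.rpow_sum_of_pos hA, mul_sum, sum_div, ← sum_neg_distrib]
    _ ≤ ∏ i ∈ s, (1 - (f i : ℝ) / a) :=
        prod_le_prod (fun _ _ => (Real.rpow_pos_of_pos hA _).le)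
          (fun i hi => natCast_rpow_neg_two_mul_div_le (hf i hi))

theorem stmt_2_general (a b r : ℕ) (ha : 0 < a) (f : Fin r → ℕ)
    (hlt : ∀ i, f i < a) (hsum : ∑ i, f i ≤ b) :
    (∏ i, (1 - (f i : ℝ) / (a : ℝ))) ≥ (a : ℝ) ^ (-(2 * (b : ℝ) / (a : ℝ)) - 1) := by
  have hsum' : ∑ i, (f i : ℝ) ≤ b := by exact_mod_cast hsum
  have hexp : -(2 * (b : ℝ) / a) - 1 ≤ -(2 * (∑ i, (f i : ℝ)) / a) := by
    have : 2 * (∑ i, (f i : ℝ)) / a ≤ 2 * (b : ℝ) / a := by gcongr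
    linarith
  calc (a : ℝ) ^ (-(2 * (b : ℝ) / a) - 1)
      ≤ (a : ℝ) ^ (-(2 * (∑ i, (f i : ℝ)) / a)) :=
        Real.rpow_le_rpow_of_exponent_le (by exact_mod_cast ha) hexp
    _ ≤ ∏ i, (1 - (f i : ℝ) / a) :=
        natCast_rpow_neg_two_mul_sum_div_le_prod _ f fun i _ => hlt i

theorem stmt_2 (a b r : ℕ) (ha : 0 < a) (hb : 0 < b) (f : Fin r → ℕ)
    (hlt : ∀ i, f i < a) (hsum : ∑ i, f i ≤ b) :
    (∏ i, (1 - (f i : ℝ) / (a : ℝ))) ≥ (a : ℝ) ^ (-(2 * (b : ℝ) / (a : ℝ)) - 1) :=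
  stmt_2_general a b r ha f hlt hsum
end
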